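/- Let B ∈ F_q^{ρ×L} be in reduced row echelon form with full row rank ρ and let v ∈ F_q^L have zero entries in all pivot columns of B. Then the number of pairs (w, j) with w ∈ F_q^ρ and j ∈ {1,…,L} satisfying w·B = e_j − v is at most ρ + 1. -/

import Mathlib

/-!
Evaluating `w ⬝ B = e_j - v` at the pivot column `p i` of row `i` gives `w i = (e_j)_{p i}`,
because that column of `B` is the `i`-th unit vector and `v` vanishes there. So a solution `w`
is determined by `j`, and if `j` is not a pivot column then `w = 0` and `e_j = v`, which fixes
`j`. Hence the solutions are indexed by the `ρ` pivot columns plus at most one further column.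
-/

open Matrix

section PivotColumns

variable {R m n : Type*} [Ring R] [DecidableEq m]
  {B : Matrix m n R} {p : m → n}

theorem col_pivot_eq_single (hpiv1 : ∀ i, B i (p i) = 1)
    (hpivcol : ∀ i i', i' ≠ i → B i' (p i) = 0) (i : m) :
    Bᵀ (p i) = Pi.single i 1 := by
  ext i'
  obtain rfl | hne := eq_or_ne i' i
  · simp [hpiv1]
  · simp [hpivcol i i' hne, hne]

variable [Fintype m] (hcol : ∀ i, Bᵀ (p i) = Pi.single i 1)
include hcol

theorem vecMul_apply_pivot (w : m → R) (i : m) : (w ᵥ* B) (p i) = w i := by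
  rw [vecMul, ← dotProduct_single_one w i, ← hcol]
  rfl

variable [DecidableEq n] {v : n → R} (hv : ∀ i, v (p i) = 0) {w : m → R} {j : n}
  (hw : w ᵥ* B = Pi.single j 1 - v)
include hv hw

theorem eq_single_apply_pivot_of_vecMul_eq (i : m) : w i = (Pi.single j 1 : n → R) (p i) := by
  simpa [vecMul_apply_pivot hcol, hv] using congrFun hw (p i)

theorem mem_range_or_single_eq_of_vecMul_eq : j ∈ Set.range p ∨ Pi.single j 1 = v := by
  refine or_iff_not_imp_left.2 fun hj => ?_
  have hw0 : w = 0 := funext fun i => by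
    rw [eq_single_apply_pivot_of_vecMul_eq hcol hv hw i]
    exact Pi.single_eq_of_ne (fun h => hj ⟨i, h⟩) 1
  rw [hw0, zero_vecMul, eq_comm, sub_eq_zero] at hw
  exact hw

end PivotColumns

theorem setOf_single_one_eq_subsingleton {α R : Type*} [DecidableEq α] [Semiring R]
    [Nontrivial R] (v : α → R) : {j : α | Pi.single j (1 : R) = v}.Subsingleton := by
  rintro j (rfl : Pi.single j 1 = v) k hk
  by_contra hne
  simpa [Pi.single_apply, hne] using congrFun hk j

theorem ncard_range_le_card {α β : Type*} [Finite α] (f : α → β) :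
    (Set.range f).ncard ≤ Nat.card α := by
  rw [← Set.image_univ, ← Set.ncard_univ]
  exact Set.ncard_image_le

theorem stmt3_general {F : Type*} [Field F] {ρ L : ℕ}
    (B : Matrix (Fin ρ) (Fin L) F) (p : Fin ρ → Fin L)
    (hpiv1 : ∀ i, B i (p i) = 1)
    (hpivcol : ∀ i i', i' ≠ i → B i' (p i) = 0)
    (v : Fin L → F) (hv : ∀ r, v (p r) = 0) :
    Set.ncard {x : (Fin ρ → F) × Fin L |
      Matrix.vecMul x.1 B = Pi.single x.2 1 - v} ≤ ρ + 1 := by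
  have hcol := col_pivot_eq_single hpiv1 hpivcol
  set T := Set.range p ∪ {j | Pi.single j (1 : F) = v}
  set solution : Fin L → (Fin ρ → F) × Fin L :=
    fun j => (fun i => (Pi.single j 1 : Fin L → F) (p i), j)
  have hsub :
      {x : (Fin ρ → F) × Fin L | x.1 ᵥ* B = Pi.single x.2 1 - v} ⊆ solution '' T := by
    rintro ⟨w, j⟩ (hw : w ᵥ* B = Pi.single j 1 - v)
    exact ⟨j, mem_range_or_single_eq_of_vecMul_eq hcol hv hw,
      Prod.ext (funext fun i => (eq_single_apply_pivot_of_vecMul_eq hcol hv hw i).symm) rfl⟩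
  calc _ ≤ (solution '' T).ncard := Set.ncard_le_ncard hsub
    _ ≤ T.ncard := Set.ncard_image_le
    _ ≤ (Set.range p).ncard + {j | Pi.single j (1 : F) = v}.ncard := Set.ncard_union_le _ _
    _ ≤ ρ + 1 := add_le_add ((ncard_range_le_card p).trans_eq (Nat.card_fin ρ))
      (Set.ncard_le_one_iff_subsingleton.2 (setOf_single_one_eq_subsingleton v))

/-- `B` in RREF with full row rank `ρ` (pivot map `p`), `v` vanishing on the
pivot columns of `B`. The number of pairs `(w, j)` with `w · B = e_j − v` is at most
`ρ + 1`. -/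
theorem stmt3 {F : Type*} [Field F] [Fintype F] {ρ L : ℕ}
    (B : Matrix (Fin ρ) (Fin L) F) (p : Fin ρ → Fin L)
    (hmono : StrictMono p)
    (hpiv1 : ∀ i, B i (p i) = 1)
    (hpivcol : ∀ i i', i' ≠ i → B i' (p i) = 0)
    (hlead : ∀ i (j : Fin L), (j : ℕ) < (p i : ℕ) → B i j = 0)
    (v : Fin L → F) (hv : ∀ r, v (p r) = 0) :
    Set.ncard {x : (Fin ρ → F) × Fin L |
      Matrix.vecMul x.1 B = Pi.single x.2 1 - v} ≤ ρ + 1 :=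
  stmt3_general B p hpiv1 hpivcol v hv
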